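/- Let ξ ⊂ (𝔻L)^p be an isotropic involutive subbundle. For Hamiltonian (p−1)-forms α, β, γ with Hamiltonian derivations Δ_α, Δ_β, Δ_γ, the Jacobiator of the bracket {α,β} = i_{Δ_α} d_{DL} β is exact: {α,{β,γ}} + {β,{γ,α}} + {γ,{α,β}} = − d_{DL}( i_{Δ_α} {β,γ} ). -/
import Mathlib


/-- An abstract model of the Atiyah (der) complex `Ω^•(DL, L)` of a line bundle `L`,
with the Lie algebra `DL` of derivations, de Rham-type differential `d`, contractions
`ι` and Lie derivatives `lie`, satisfying the usual Cartan calculus identities. -/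
structure CartanCalculus (DL : Type) [LieRing DL]
    (Ω : ℕ → Type) [∀ n, AddCommGroup (Ω n)] [∀ n, Module ℝ (Ω n)] where
  d : ∀ n, Ω n →ₗ[ℝ] Ω (n+1)
  ι : DL → ∀ n, Ω (n+1) →ₗ[ℝ] Ω n
  lie : DL → ∀ n, Ω n →ₗ[ℝ] Ω n
  d_d : ∀ n (α : Ω n), d (n+1) (d n α) = 0
  ι_ι : ∀ Δ Δ' n (α : Ω (n+2)), ι Δ n (ι Δ' (n+1) α) = - ι Δ' n (ι Δ (n+1) α)
  ι_addD : ∀ Δ Δ' n (α : Ω (n+1)), ι (Δ + Δ') n α = ι Δ n α + ι Δ' n α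
  ι_zeroD : ∀ n (α : Ω (n+1)), ι (0 : DL) n α = 0
  lie_deg_zero : ∀ Δ (s : Ω 0), lie Δ 0 s = ι Δ 0 (d 0 s)
  cartan : ∀ Δ n (α : Ω (n+1)), lie Δ (n+1) α = ι Δ (n+1) (d (n+1) α) + d n (ι Δ n α)
  lie_d : ∀ Δ n (α : Ω n), lie Δ (n+1) (d n α) = d n (lie Δ n α)
  ι_bracket : ∀ Δ Δ' n (α : Ω (n+1)), ι ⁅Δ, Δ'⁆ n α = lie Δ n (ι Δ' n α) - ι Δ' n (lie Δ (n+1) α)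
  lie_bracket : ∀ Δ Δ' n (α : Ω n), lie ⁅Δ, Δ'⁆ n α = lie Δ n (lie Δ' n α) - lie Δ' n (lie Δ n α)
  lie_zeroD : ∀ n (α : Ω n), lie (0 : DL) n α = 0

section
variable {DL : Type} [LieRing DL] {Ω : ℕ → Type}
  [∀ n, AddCommGroup (Ω n)] [∀ n, Module ℝ (Ω n)]

/-- Higher Dorfman–Jacobi bracket on `Γ((𝔻L)^p)` (form parts modelled by `Ω (q+2)`,
`p = q+2`, so that Hamiltonian `(p−1)`-forms live in `Ω (q+1)`). -/
def higherDorfman (C : CartanCalculus DL Ω) (q : ℕ) (e e' : DL × Ω (q+2)) : DL × Ω (q+2) :=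
  (⁅e.1, e'.1⁆, C.lie e.1 (q+2) e'.2 - C.ι e'.1 (q+2) (C.d (q+2) e.2))

/-- Pairing `⟨(Δ,α),(∇,β)⟩ = i_Δ β + i_∇ α`. -/
def higherPairing (C : CartanCalculus DL Ω) (q : ℕ) (e e' : DL × Ω (q+2)) : Ω (q+1) :=
  C.ι e.1 (q+1) e'.2 + C.ι e'.1 (q+1) e.2

/-- The bracket `{α,β} = i_{Δ_α} d_{DL} β` of Hamiltonian `(p−1)`-forms. -/
def hamBr (C : CartanCalculus DL Ω) (q : ℕ) (Δα : DL) (β : Ω (q+1)) : Ω (q+1) :=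
  C.ι Δα (q+1) (C.d (q+1) β)

end

/-- for an isotropic involutive subbundle `ξ ⊂ (𝔻L)^p`, the
Jacobiator of the bracket `{α,β} = i_{Δ_α} d β` on Hamiltonian forms is exact:
`{α,{β,γ}} + {β,{γ,α}} + {γ,{α,β}} = − d ( i_{Δ_α} {β,γ} )`. -/
theorem hamiltonian_bracket_jacobiator (DL : Type) [LieRing DL] [Module ℝ DL]
    (Ω : ℕ → Type) [∀ n, AddCommGroup (Ω n)] [∀ n, Module ℝ (Ω n)]
    (C : CartanCalculus DL Ω) (q : ℕ) (ξ : Submodule ℝ (DL × Ω (q+2)))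
    (hiso : ∀ e ∈ ξ, ∀ e' ∈ ξ, higherPairing C q e e' = 0)
    (hinv : ∀ e ∈ ξ, ∀ e' ∈ ξ, higherDorfman C q e e' ∈ ξ)
    (α β γ : Ω (q+1)) (Δα Δβ Δγ : DL)
    (hα : ((Δα, C.d (q+1) α) : DL × Ω (q+2)) ∈ ξ)
    (hβ : ((Δβ, C.d (q+1) β) : DL × Ω (q+2)) ∈ ξ)
    (hγ : ((Δγ, C.d (q+1) γ) : DL × Ω (q+2)) ∈ ξ) :
    hamBr C q Δα (hamBr C q Δβ γ) + hamBr C q Δβ (hamBr C q Δγ α)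
      + hamBr C q Δγ (hamBr C q Δα β)
      = - C.d q (C.ι Δα q (hamBr C q Δβ γ)) := by
  -- abbreviations
  set a := hamBr C q Δα (hamBr C q Δβ γ) with ha
  set b := hamBr C q Δβ (hamBr C q Δγ α) with hb
  set D := C.d q (C.ι Δα q (hamBr C q Δβ γ)) with hD
  -- the Dorfman bracket of the lifts of α and β
  have hd : higherDorfman C q (Δα, C.d (q+1) α) (Δβ, C.d (q+1) β)
      = (⁅Δα, Δβ⁆, C.d (q+1) (hamBr C q Δα β)) := by
    simp only [higherDorfman, hamBr, C.cartan, C.d_d, map_zero, zero_add, sub_zero, map_add,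
      add_zero]
  have hmem := hinv _ hα _ hβ
  rw [hd] at hmem
  -- isotropy of the Dorfman bracket against the lift of γ
  have h2 := hiso _ hmem _ hγ
  simp only [higherPairing] at h2
  -- Cartan: ι of the bracket
  have h3 := C.ι_bracket Δα Δβ (q+1) (C.d (q+1) γ)
  -- lie Δα dγ = d {α,γ}
  have h4 : C.lie Δα (q+2) (C.d (q+1) γ) = C.d (q+1) (hamBr C q Δα γ) := by
    simp only [hamBr, C.cartan, C.d_d, map_zero, zero_add]
  -- Cartan formula for lie Δα {β,γ}
  have h5 := C.cartan Δα q (hamBr C q Δβ γ)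
  -- antisymmetry {α,γ} = -{γ,α}
  have h6 : hamBr C q Δα γ = - hamBr C q Δγ α := by
    have := hiso _ hα _ hγ
    simp only [higherPairing] at this
    simp only [hamBr]
    exact eq_neg_of_add_eq_zero_left this
  have h6' : C.ι Δβ (q+1) (C.d (q+1) (hamBr C q Δα γ)) = - b := by
    rw [h6, map_neg, map_neg, hb]; rfl
  have key : C.ι ⁅Δα, Δβ⁆ (q+1) (C.d (q+1) γ) = a + b + D := by
    rw [h3, h4, h6']
    have : C.lie Δα (q+1) (C.ι Δβ (q+1) (C.d (q+1) γ)) = a + D := by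
      rw [ha, hamBr, ← h5]; rfl
    rw [this]; abel
  have hc : hamBr C q Δγ (hamBr C q Δα β) = -(a + b + D) := by
    have h2' : (a + b + D) + C.ι Δγ (q+1) (C.d (q+1) (hamBr C q Δα β)) = 0 := by
      rw [← key]; exact h2
    have := eq_neg_of_add_eq_zero_right h2'
    rw [hamBr]; exact this
  rw [hc]; abel
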